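/- A virtual link diagram is checkerboard colorable if and only if it admits an alternate orientation, i.e., an orientation of the edges of the underlying 4-valent graph such that at every classical crossing the four edges alternate in/out around the crossing (the orientation of each strand reverses at the crossing) and at every virtual crossing the strands pass through with orientation conventions as for the alternate pattern. -/
import Mathlib


open scoped Classical

/-- Compatibility of an assignment `g` of a value to each side (left = `false`,
right = `true`) of each edge of a diagram: the value is constant along the two
sides of each strand away from crossings, and at each classical crossing the
values of the sides are identified according to the four corner regions of the
crossing (`chir` records the chirality of the crossing, i.e. on which side the
second strand crosses the first). -/
def SideCompatible {S C X : Type*} (next : S ≃ S) (passes : C → Fin 2 → S)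
    (chir : C → Bool) (g : S → Bool → X) : Prop :=
  (∀ s : S, (∀ c k, passes c k ≠ s) → ∀ b, g (next s) b = g s b) ∧
  (∀ c, chir c = true →
    g (passes c 0) false = g (passes c 1) true ∧
    g (passes c 0) true = g (next (passes c 1)) true ∧
    g (next (passes c 0)) false = g (passes c 1) false ∧
    g (next (passes c 0)) true = g (next (passes c 1)) false) ∧
  (∀ c, chir c = false →
    g (passes c 0) false = g (next (passes c 1)) false ∧
    g (passes c 0) true = g (passes c 1) false ∧
    g (next (passes c 0)) true = g (passes c 1) true ∧
    g (next (passes c 0)) false = g (next (passes c 1)) true)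

/-- An abstract link diagram (ALD): edges `S` with traversal successor `next`,
classical crossings `C` with chirality `chir`, faces `F`, and for each edge its
left and right faces (`side`).  The face assignment is compatible with the
crossing structure, and `F` carries exactly the identifications forced by the
diagram: any compatible assignment factors through `side`. -/
structure ALD where
  S : Type
  F : Type
  C : Type
  next : S ≃ S
  passes : C → Fin 2 → S
  chir : C → Bool
  side : S → Bool → F
  side_compat : SideCompatible next passes chir side
  side_univ : ∀ {X : Type} (g : S → Bool → X),
    SideCompatible next passes chir g → ∃ h : F → X, ∀ s b, g s b = h (side s b)

/-- `D` is checkerboard colorable: the faces admit a 2-coloring in which the two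
faces on either side of any edge receive different colors. -/
def Checkerboard (D : ALD) : Prop :=
  ∃ κ : D.F → ZMod 2, ∀ s : D.S, κ (D.side s false) ≠ κ (D.side s true)

/-- `D` admits an alternate orientation: directions of the edges such that the
orientation of each strand reverses at every classical crossing (so the four
edge-ends alternate in/out around each crossing). -/
def AlternateOrientation (D : ALD) : Prop :=
  ∃ o : D.S → ZMod 2,
    (∀ s, o (D.next s) = o s + (if ∃ c k, D.passes c k = s then 1 else 0)) ∧
    (∀ c : D.C, o (D.passes c 0) ≠ o (D.passes c 1))

/-- A virtual link diagram is checkerboard colorable if and only if it admits an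
alternate orientation (Kamada–Nakabo–Satoh). -/
theorem checkerboard_iff_alternateOrientation (D : ALD) :
    Checkerboard D ↔ AlternateOrientation D := by
  obtain ⟨h1, h2, h3⟩ := D.side_compat
  have zfact : ∀ a b : ZMod 2, a ≠ b → a = b + 1 := by decide
  have zfact2 : ∀ a b : ZMod 2, a ≠ b → b = a + 1 := by decide
  constructor
  · rintro ⟨κ, hκ⟩
    refine ⟨fun s => κ (D.side s false), ?_, ?_⟩
    · intro s
      split_ifs with h
      · obtain ⟨c, k, hck⟩ := h
        subst hck
        fin_cases k
        · show κ (D.side (D.next (D.passes c 0)) false) = κ (D.side (D.passes c 0) false) + 1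
          cases hch : D.chir c with
          | false =>
            obtain ⟨e1, e2, e3, e4⟩ := h3 c hch
            rw [e4, e1]
            exact zfact _ _ (Ne.symm (hκ _))
          | true =>
            obtain ⟨e1, e2, e3, e4⟩ := h2 c hch
            rw [e3, e1]
            exact zfact _ _ (hκ _)
        · show κ (D.side (D.next (D.passes c 1)) false) = κ (D.side (D.passes c 1) false) + 1
          cases hch : D.chir c with
          | false =>
            obtain ⟨e1, e2, e3, e4⟩ := h3 c hch
            rw [← e1, ← e2]
            exact zfact _ _ (hκ _)
          | true =>
            obtain ⟨e1, e2, e3, e4⟩ := h2 c hch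
            rw [← e4, ← e3]
            exact zfact _ _ (Ne.symm (hκ _))
      · push_neg at h
        show κ (D.side (D.next s) false) = κ (D.side s false) + 0
        rw [h1 s h false, add_zero]
    · intro c
      show κ (D.side (D.passes c 0) false) ≠ κ (D.side (D.passes c 1) false)
      cases hch : D.chir c with
      | false =>
        obtain ⟨e1, e2, e3, e4⟩ := h3 c hch
        rw [← e2]
        exact hκ _
      | true =>
        obtain ⟨e1, e2, e3, e4⟩ := h2 c hch
        rw [e1]
        exact Ne.symm (hκ _)
  · rintro ⟨o, ho1, ho2⟩
    have hn : ∀ c (k : Fin 2), o (D.next (D.passes c k)) = o (D.passes c k) + 1 := by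
      intro c k
      rw [ho1, if_pos ⟨c, k, rfl⟩]
    have hcomp : SideCompatible D.next D.passes D.chir
        (fun s b => o s + (if b then 1 else 0)) := by
      refine ⟨?_, ?_, ?_⟩
      · intro s hs b
        show o (D.next s) + _ = o s + _
        rw [ho1, if_neg (by push_neg; exact hs), add_zero]
      · intro c hch
        have e0 := hn c 0
        have e1 := hn c 1
        have hb := zfact2 _ _ (ho2 c)
        simp only [e0, e1, hb]
        generalize o (D.passes c 0) = a
        revert a
        decide
      · intro c hch
        have e0 := hn c 0
        have e1 := hn c 1
        have hb := zfact2 _ _ (ho2 c)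
        simp only [e0, e1, hb]
        generalize o (D.passes c 0) = a
        revert a
        decide
    obtain ⟨h, hh⟩ := D.side_univ _ hcomp
    refine ⟨h, fun s => ?_⟩
    rw [← hh s false, ← hh s true]
    have : ∀ a : ZMod 2, a + 0 ≠ a + 1 := by decide
    exact this (o s)
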